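/- Let r ≥ 2, n ≥ 1, and k ≥ 1 be integers with k ≤ (r-1)n, let p ∈ {0, 1, ..., r-1}, and set t = rk - (1-p)(r-1), η = (r-1)n - k, D = (r-1)(rn+p-1), and μ = D(D-1)···(D-t+1) (the falling factorial of D of length t). Let w = e^{2πi/r} and suppose x_1, ..., x_η are complex numbers such that R_{rn+p}^{(t)}(X) = μ · ∏_{k=1}^{η} ∏_{l=0}^{r-1} (X - x_k w^l). Then μ · ∏_{k=1}^{η} x_k^r = (-1)^η · t! · C_r(rn + p - η - 1, η). -/

import Mathlib

noncomputable def RBon (r : ℕ) : ℕ → Polynomial ℂ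
  | 0 => 0
  | 1 => 1
  | n + 2 => ∑ i ∈ (Finset.range r).attach,
      Polynomial.X ^ (i : ℕ) * RBon r (n + 2 - (r - (i : ℕ)))
  decreasing_by
    have h := i.2
    rw [Finset.mem_range] at h
    omega

noncomputable def rnomial (r n j : ℕ) : ℕ :=
  ((∑ i ∈ Finset.range r, (Polynomial.X : Polynomial ℕ) ^ i) ^ n).coeff j
/-
Compare constant terms in the assumed factorisation. The constant term of `R^{(t)}` is `t!` times
the `t`-th coefficient of `R`, and the recursion, matched against
`C_r(a + 1, b) = ∑_{d < r} C_r(a, b - d)`, gives `R_{m+1} = ∑_j C_r(m - j, j) X^{(r-1)m - rj}`;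
as `t + rη = (r - 1)(rn + p - 1)`, the relevant coefficient is `C_r(rn + p - 1 - η, η)`. On the
other side `∏_l (X - x w^l) = X^r - x^r` has constant term `-x^r`.
-/

open Polynomial Finset

lemma rnomial_succ (r a b : ℕ) :
    rnomial r (a + 1) b = ∑ d ∈ range r, if d ≤ b then rnomial r a (b - d) else 0 := by
  rw [rnomial, pow_succ, mul_comm, sum_mul, finsetSum_coeff]
  exact sum_congr rfl fun d _ => coeff_X_pow_mul' _ _ _

lemma rnomial_eq_zero_of_lt {r a b : ℕ} (h : (r - 1) * a < b) : rnomial r a b = 0 := by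
  refine coeff_eq_zero_of_natDegree_lt (natDegree_pow_le.trans_lt ?_)
  refine lt_of_le_of_lt ?_ h
  rw [mul_comm]
  refine Nat.mul_le_mul_right _ (natDegree_sum_le_of_forall_le _ _ fun i hi => ?_)
  exact (natDegree_X_pow_le i).trans (Nat.le_sub_one_of_lt (mem_range.1 hi))

lemma RBon_zero (r : ℕ) : RBon r 0 = 0 := by rw [RBon]

lemma RBon_one (r : ℕ) : RBon r 1 = 1 := by rw [RBon]

lemma RBon_add_two (r n : ℕ) :
    RBon r (n + 2) = ∑ d ∈ range r, X ^ (r - 1 - d) * RBon r (n + 1 - d) := by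
  rw [RBon, sum_attach (range r) fun i => X ^ i * RBon r (n + 2 - (r - i))]
  refine (sum_range_reflect _ r).symm.trans (sum_congr rfl fun d hd => ?_)
  rw [show n + 2 - (r - (r - 1 - d)) = n + 1 - d by have := mem_range.1 hd; omega]

lemma natDegree_RBon_le (r m : ℕ) : (RBon r (m + 1)).natDegree ≤ (r - 1) * m := by
  induction m using Nat.strong_induction_on with
  | _ m ih =>
  rcases m with _ | n
  · simp [RBon_one]
  rw [RBon_add_two]
  refine natDegree_sum_le_of_forall_le _ _ fun d _ => ?_
  rcases lt_or_ge n d with hnd | hdn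
  · simp [Nat.sub_eq_zero_of_le hnd, RBon_zero]
  rw [show n + 1 - d = n - d + 1 by omega]
  have hsplit : (r - 1) * (n + 1) = (r - 1) * (n - d) + (r - 1) * (d + 1) := by
    rw [← mul_add]; congr 1; omega
  have hle : r - 1 ≤ (r - 1) * (d + 1) := Nat.le_mul_of_pos_right _ d.succ_pos
  calc (X ^ (r - 1 - d) * RBon r (n - d + 1)).natDegree
      ≤ (r - 1 - d) + (r - 1) * (n - d) :=
        natDegree_mul_le.trans (add_le_add (natDegree_X_pow_le _) (ih _ (by omega)))
    _ ≤ (r - 1) * (n + 1) := by omega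

lemma coeff_RBon {r : ℕ} (hr : 0 < r) (m j e : ℕ) (h : e + r * j = (r - 1) * m) :
    (RBon r (m + 1)).coeff e = rnomial r (m - j) j := by
  obtain ⟨s, rfl⟩ := Nat.exists_eq_add_one_of_ne_zero hr.ne'
  rw [Nat.add_sub_cancel] at h
  induction m using Nat.strong_induction_on generalizing j e with
  | _ m ih =>
  rcases m with _ | n
  · obtain ⟨rfl, rfl⟩ : e = 0 ∧ j = 0 := by constructor <;> nlinarith
    simp [RBon_one, rnomial]
  have hjn : j ≤ n := by nlinarith
  rw [RBon_add_two, finsetSum_coeff, show n + 1 - j = n - j + 1 by omega, rnomial_succ,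
    Nat.cast_sum, Nat.add_sub_cancel]
  refine sum_congr rfl fun d hd => ?_
  have hds : d ≤ s := by have := mem_range.1 hd; omega
  rw [coeff_X_pow_mul']
  split_ifs with hie hdj hdj
  · rw [show n + 1 - d = n - d + 1 by omega, ih (n - d) (by omega) (j - d) _ ?_,
      show n - d - (j - d) = n - j by omega]
    zify [hie, hdj, hdj.trans hjn, hds] at h ⊢
    linear_combination h
  · rcases lt_or_ge n d with hnd | hdn
    · simp [Nat.sub_eq_zero_of_le hnd, RBon_zero]
    rw [show n + 1 - d = n - d + 1 by omega, coeff_eq_zero_of_natDegree_lt, Nat.cast_zero]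
    refine (natDegree_RBon_le _ _).trans_lt ?_
    have hjd : (s + 1) * j < (s + 1) * d := Nat.mul_lt_mul_of_pos_left (by omega) s.succ_pos
    rw [Nat.add_sub_cancel]
    zify [hie, hdn, hds] at h hjd ⊢
    linarith
  · rw [rnomial_eq_zero_of_lt, Nat.cast_zero]
    rw [Nat.add_sub_cancel]
    replace hie := not_le.mp hie
    zify [hdj, hjn, hds] at h hie ⊢
    linarith
  · rw [Nat.cast_zero]

theorem stmt_8_general (r n k : ℕ) (hr : 2 ≤ r) (hn : 1 ≤ n)
    (hk2 : k ≤ (r - 1) * n)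
    (p : ℕ)
    (t : ℕ) (ht : (t : ℤ) = (r : ℤ) * k - (1 - (p : ℤ)) * ((r : ℤ) - 1))
    (η : ℕ) (hη : η = (r - 1) * n - k)
    (μ : ℕ)
    (w : ℂ) (hw : w = Complex.exp (2 * Real.pi * Complex.I / r))
    (x : Fin η → ℂ)
    (hfac : Polynomial.derivative^[t] (RBon r (r * n + p)) =
      Polynomial.C (μ : ℂ) * ∏ i : Fin η, ∏ l ∈ Finset.range r,
        (Polynomial.X - Polynomial.C (x i * w ^ l))) :
    (μ : ℂ) * ∏ i : Fin η, x i ^ r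
      = (-1) ^ η * (t.factorial : ℂ) * (rnomial r (r * n + p - η - 1) η : ℂ) := by
  obtain ⟨m, hm⟩ : ∃ m, r * n + p = m + 1 :=
    ⟨r * n + p - 1, by have := Nat.mul_pos (by omega : 0 < r) hn; omega⟩
  have hdeg : t + r * η = (r - 1) * m := by
    zify [hk2, (by omega : 1 ≤ r)] at ht hη hm ⊢
    linear_combination ht + r * hη + (r - 1) * hm
  have hζ : IsPrimitiveRoot w r := hw ▸ Complex.isPrimitiveRoot_exp r (by omega)
  have hroots (a : ℂ) : ∏ l ∈ range r, (X - C (a * w ^ l)) = X ^ r - C (a ^ r) := by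
    simp_rw [mul_comm a]
    exact (X_pow_sub_C_eq_prod hζ (by omega) rfl).symm
  simp_rw [hroots] at hfac
  have hconst := congrArg (coeff · 0) hfac
  simp only [coeff_iterate_derivative, zero_add, Nat.descFactorial_self, nsmul_eq_mul, hm,
    coeff_RBon (by omega) m η t hdeg, coeff_C_mul] at hconst
  rw [coeff_zero_eq_eval_zero] at hconst
  simp only [eval_prod, eval_sub, eval_pow, eval_X, eval_C, zero_pow (by omega : r ≠ 0), zero_sub,
    prod_neg, card_univ, Fintype.card_fin] at hconst
  rw [show r * n + p - η - 1 = m - η by omega]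
  have hsq : ((-1 : ℂ) ^ η) * (-1) ^ η = 1 := by rw [← mul_pow]; norm_num
  linear_combination (-(-1) ^ η) * hconst - (μ * ∏ i, x i ^ r) * hsq

theorem stmt_8 (r n k : ℕ) (hr : 2 ≤ r) (hn : 1 ≤ n) (hk : 1 ≤ k)
    (hk2 : k ≤ (r - 1) * n)
    (p : ℕ) (hp : p ≤ r - 1)
    (t : ℕ) (ht : (t : ℤ) = (r : ℤ) * k - (1 - (p : ℤ)) * ((r : ℤ) - 1))
    (η : ℕ) (hη : η = (r - 1) * n - k)
    (D : ℕ) (hD : D = (r - 1) * (r * n + p - 1))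
    (μ : ℕ) (hμ : μ = D.descFactorial t)
    (w : ℂ) (hw : w = Complex.exp (2 * Real.pi * Complex.I / r))
    (x : Fin η → ℂ)
    (hfac : Polynomial.derivative^[t] (RBon r (r * n + p)) =
      Polynomial.C (μ : ℂ) * ∏ i : Fin η, ∏ l ∈ Finset.range r,
        (Polynomial.X - Polynomial.C (x i * w ^ l))) :
    (μ : ℂ) * ∏ i : Fin η, x i ^ r
      = (-1) ^ η * (t.factorial : ℂ) * (rnomial r (r * n + p - η - 1) η : ℂ) :=
  stmt_8_general r n k hr hn hk2 p t ht η hη μ w hw x hfac
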